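/- Let u be a complex-valued C^2 function on a domain in R^d and A a real C^1 vector field. If (D + A)^2 u = 0, where D = -i∇, then for every ε > 0 the function u_ε = sqrt(|u|^2 + ε^2) satisfies Δu_ε ≥ 0 (i.e. u_ε is subharmonic). -/

import Mathlib

open Metric Set

noncomputable def pd {d : ℕ} (f : EuclideanSpace ℝ (Fin d) → ℂ) (j : Fin d)
    (x : EuclideanSpace ℝ (Fin d)) : ℂ :=
  fderiv ℝ f x (EuclideanSpace.single j 1)

noncomputable def pdR {d : ℕ} (f : EuclideanSpace ℝ (Fin d) → ℝ) (j : Fin d)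
    (x : EuclideanSpace ℝ (Fin d)) : ℝ :=
  fderiv ℝ f x (EuclideanSpace.single j 1)

/-- The magnetic derivative `(D_j + A_j) f` where `D = -i∇`. -/
noncomputable def magD {d : ℕ} (A : EuclideanSpace ℝ (Fin d) → EuclideanSpace ℝ (Fin d))
    (f : EuclideanSpace ℝ (Fin d) → ℂ) (j : Fin d) (x : EuclideanSpace ℝ (Fin d)) : ℂ :=
  -Complex.I * pd f j x + (A x j : ℂ) * f x

/-- The magnetic Laplacian `(D+A)^2 f = Σ_j (D_j+A_j)(D_j+A_j) f`. -/
noncomputable def magLap {d : ℕ} (A : EuclideanSpace ℝ (Fin d) → EuclideanSpace ℝ (Fin d))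
    (f : EuclideanSpace ℝ (Fin d) → ℂ) (x : EuclideanSpace ℝ (Fin d)) : ℂ :=
  ∑ j, (-Complex.I * pd (fun y => magD A f j y) j x + (A x j : ℂ) * magD A f j x)

/-!
Write `s = √(|u|² + ε²)` and `∇_A u = ∇u + iAu = i(D + A)u`. Differentiating twice,
`s Δs = |∇u|² + Re(ū Δu) - |∇s|²`. The real part of `ū (D + A)²u = 0` says
`|∇u|² + Re(ū Δu) = |∇_A u|²`, so `s Δs = |∇_A u|² - |∇s|²`, which is nonnegative by the
diamagnetic inequality: `∇s = Re(ū ∇u) / s = Re(ū ∇_A u) / s` because `Re(ū · iAu) = 0`,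
and `|u| ≤ s`.
-/

open Filter Topology
open scoped RealInnerProductSpace

section SqrtNormSqAddSq

variable {E F : Type*} [NormedAddCommGroup E] [NormedSpace ℝ E] [NormedAddCommGroup F]
  [InnerProductSpace ℝ F] {f : E → F} {x : E} {ε : ℝ}

theorem hasFDerivAt_sqrt_norm_sq_add_sq {f' : E →L[ℝ] F} (hf : HasFDerivAt f f' x)
    (hε : ε ≠ 0) :
    HasFDerivAt (fun y => √(‖f y‖ ^ 2 + ε ^ 2))
      ((1 / (2 * √(‖f x‖ ^ 2 + ε ^ 2))) • (2 • (innerSL ℝ (f x)).comp f')) x :=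
  (hf.norm_sq.add_const (ε ^ 2)).sqrt (by positivity)

theorem fderiv_sqrt_norm_sq_add_sq_apply (hf : DifferentiableAt ℝ f x) (hε : ε ≠ 0) (v : E) :
    fderiv ℝ (fun y => √(‖f y‖ ^ 2 + ε ^ 2)) x v =
      ⟪f x, fderiv ℝ f x v⟫ / √(‖f x‖ ^ 2 + ε ^ 2) := by
  rw [(hasFDerivAt_sqrt_norm_sq_add_sq hf.hasFDerivAt hε).fderiv]
  simp only [smul_apply, ContinuousLinearMap.comp_apply, coe_innerSL_apply,
    nsmul_eq_mul, Nat.cast_ofNat, smul_eq_mul]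
  field_simp

theorem fderiv_fderiv_sqrt_norm_sq_add_sq_apply (hf : ContDiffAt ℝ 2 f x) (hε : ε ≠ 0)
    (v : E) :
    fderiv ℝ (fun y => fderiv ℝ (fun z => √(‖f z‖ ^ 2 + ε ^ 2)) y v) x v =
      (‖fderiv ℝ f x v‖ ^ 2 + ⟪f x, fderiv ℝ (fun y => fderiv ℝ f y v) x v⟫) /
          √(‖f x‖ ^ 2 + ε ^ 2)
        - ⟪f x, fderiv ℝ f x v⟫ ^ 2 / √(‖f x‖ ^ 2 + ε ^ 2) ^ 3 := by
  have hdiff : ∀ᶠ y in 𝓝 x, DifferentiableAt ℝ f y :=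
    (hf.eventually (by simp)).mono fun y hy => hy.differentiableAt (by norm_num)
  have hdiff' : DifferentiableAt ℝ (fun y => fderiv ℝ f y v) x :=
    ((hf.fderiv_right (m := 1) le_rfl).differentiableAt one_ne_zero).clm_apply
      (differentiableAt_const v)
  have hs : √(‖f x‖ ^ 2 + ε ^ 2) ≠ 0 := by positivity
  have hsqrt := hasFDerivAt_sqrt_norm_sq_add_sq hdiff.self_of_nhds.hasFDerivAt hε
  have hquot := ((hdiff.self_of_nhds.hasFDerivAt.inner ℝ hdiff'.hasFDerivAt).mul
    ((hasDerivAt_inv hs).comp_hasFDerivAt x hsqrt)).congr_of_eventuallyEq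
    (hdiff.mono fun y hy =>
      (fderiv_sqrt_norm_sq_add_sq_apply hy hε v).trans (div_eq_mul_inv _ _))
  rw [hquot.fderiv]
  simp only [Function.comp_apply, add_apply, smul_apply,
    ContinuousLinearMap.comp_apply, coe_innerSL_apply,
    ContinuousLinearMap.prod_apply, fderivInnerCLM_apply, real_inner_self_eq_norm_sq,
    nsmul_eq_mul, Nat.cast_ofNat, smul_eq_mul]
  field_simp
  ring

end SqrtNormSqAddSq

theorem real_inner_sq_div_pow_three_le {F : Type*} [NormedAddCommGroup F]
    [InnerProductSpace ℝ F] {a : F} (b : F) {s : ℝ} (hs : 0 < s) (ha : ‖a‖ ≤ s) :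
    ⟪a, b⟫ ^ 2 / s ^ 3 ≤ ‖b‖ ^ 2 / s := by
  have hab : |⟪a, b⟫| ≤ s * ‖b‖ :=
    (abs_real_inner_le_norm a b).trans (mul_le_mul_of_nonneg_right ha (norm_nonneg b))
  calc ⟪a, b⟫ ^ 2 / s ^ 3 ≤ (s * ‖b‖) ^ 2 / s ^ 3 :=
        div_le_div_of_nonneg_right (sq_le_sq' (neg_le_of_abs_le hab) (le_of_abs_le hab))
          (by positivity)
    _ = ‖b‖ ^ 2 / s := by field_simp

section Magnetic

variable {d : ℕ} {A : EuclideanSpace ℝ (Fin d) → EuclideanSpace ℝ (Fin d)}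
  {u : EuclideanSpace ℝ (Fin d) → ℂ} {j : Fin d} {x : EuclideanSpace ℝ (Fin d)}

theorem pd_magD (hu : ContDiffAt ℝ 2 u x) (hA : DifferentiableAt ℝ A x) :
    pd (fun y => magD A u j y) j x =
      -Complex.I * pd (fun y => pd u j y) j x + (pdR (fun y => A y j) j x : ℂ) * u x
        + (A x j : ℂ) * pd u j x := by
  have hpd : DifferentiableAt ℝ (fun y => pd u j y) x :=
    ((hu.fderiv_right (m := 1) le_rfl).differentiableAt one_ne_zero).clm_apply
      (differentiableAt_const _)
  have hAj : HasFDerivAt (fun y => A y j) _ x :=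
    (EuclideanSpace.proj (𝕜 := ℝ) j).hasFDerivAt.comp x hA.hasFDerivAt
  have hmagD : HasFDerivAt (fun y => magD A u j y) _ x :=
    (hpd.hasFDerivAt.const_mul (-Complex.I)).add
      ((Complex.ofRealCLM.hasFDerivAt.comp x hAj).mul
        (hu.differentiableAt (by norm_num)).hasFDerivAt)
  rw [pd, hmagD.fderiv, pdR, hAj.fderiv]
  simp only [pd, Function.comp_apply, Complex.ofRealCLM_apply, add_apply,
    smul_apply, ContinuousLinearMap.comp_apply, PiLp.proj_apply, smul_eq_mul]
  ring

theorem real_inner_magLap (hu : ContDiffAt ℝ 2 u x) (hA : DifferentiableAt ℝ A x) :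
    ⟪u x, magLap A u x⟫ =
      ∑ j, (‖magD A u j x‖ ^ 2 - ‖pd u j x‖ ^ 2 - ⟪u x, pd (fun y => pd u j y) j x⟫) := by
  rw [magLap, inner_sum]
  refine Finset.sum_congr rfl fun j _ => ?_
  rw [pd_magD hu hA, magD]
  simp only [Complex.inner, Complex.sq_norm, Complex.normSq_apply, Complex.mul_re,
    Complex.mul_im, Complex.add_re, Complex.add_im, Complex.neg_re, Complex.neg_im,
    Complex.I_re, Complex.I_im, Complex.ofReal_re, Complex.ofReal_im, Complex.conj_re,
    Complex.conj_im]
  ring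

theorem real_inner_pd_eq_real_inner_I_mul_magD :
    ⟪u x, pd u j x⟫ = ⟪u x, Complex.I * magD A u j x⟫ := by
  simp only [magD, Complex.inner, Complex.mul_re, Complex.mul_im, Complex.add_re,
    Complex.add_im, Complex.neg_re, Complex.neg_im, Complex.I_re, Complex.I_im,
    Complex.ofReal_re, Complex.ofReal_im, Complex.conj_re, Complex.conj_im]
  ring

end Magnetic

/-- if `(D+A)^2 u = 0` on a domain, then `u_ε = sqrt(|u|^2+ε^2)` is
subharmonic, i.e. `Δ u_ε ≥ 0` on the domain. -/
theorem stmt0 {d : ℕ} (Ω : Set (EuclideanSpace ℝ (Fin d))) (hΩ : IsOpen Ω)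
    (u : EuclideanSpace ℝ (Fin d) → ℂ)
    (A : EuclideanSpace ℝ (Fin d) → EuclideanSpace ℝ (Fin d))
    (hu : ContDiffOn ℝ 2 u Ω) (hA : ContDiffOn ℝ 1 A Ω)
    (heq : ∀ x ∈ Ω, magLap A u x = 0) (ε : ℝ) (hε : 0 < ε) :
    ∀ x ∈ Ω,
      0 ≤ ∑ j, pdR (fun y => pdR (fun z => Real.sqrt (‖u z‖ ^ 2 + ε ^ 2)) j y) j x := by
  intro x hx
  have hux : ContDiffAt ℝ 2 u x := hu.contDiffAt (hΩ.mem_nhds hx)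
  have hAx : DifferentiableAt ℝ A x :=
    (hA.contDiffAt (hΩ.mem_nhds hx)).differentiableAt one_ne_zero
  set s := √(‖u x‖ ^ 2 + ε ^ 2)
  have hs : 0 < s := by positivity
  have hus : ‖u x‖ ≤ s := Real.le_sqrt_of_sq_le (le_add_of_nonneg_right (sq_nonneg ε))
  have hgauge : ∑ j, (‖pd u j x‖ ^ 2 + ⟪u x, pd (fun y => pd u j y) j x⟫) =
      ∑ j, ‖magD A u j x‖ ^ 2 := by
    have h := real_inner_magLap hux hAx
    rw [heq x hx, inner_zero_right, Finset.sum_sub_distrib, Finset.sum_sub_distrib] at h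
    rw [Finset.sum_add_distrib]
    linarith
  calc 0 ≤ ∑ j, (‖Complex.I * magD A u j x‖ ^ 2 / s
        - ⟪u x, Complex.I * magD A u j x⟫ ^ 2 / s ^ 3) :=
        Finset.sum_nonneg fun j _ => sub_nonneg.2 (real_inner_sq_div_pow_three_le _ hs hus)
    _ = ∑ j, ((‖pd u j x‖ ^ 2 + ⟪u x, pd (fun y => pd u j y) j x⟫) / s
        - ⟪u x, pd u j x⟫ ^ 2 / s ^ 3) := by
        simp only [norm_mul, Complex.norm_I, one_mul, ← real_inner_pd_eq_real_inner_I_mul_magD,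
          Finset.sum_sub_distrib, ← Finset.sum_div, hgauge]
    _ = _ := Finset.sum_congr rfl fun j _ =>
        (fderiv_fderiv_sqrt_norm_sq_add_sq_apply hux hε.ne' _).symm
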